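/- Let d ≥ 2 and let a, r be positive integers with r < a − 1, and set p = ⌈(a−1)/r⌉. Let S(a,r) ⊆ ℕ^d be the additive submonoid generated by {e_1,…,e_{d−1}} ∪ {(a+j)·e_d : 0 ≤ j ≤ r} ∪ {e_i + e_d : 1 ≤ i ≤ d−1}. For every k with 0 ≤ k ≤ p−1 and every i with 1 ≤ i ≤ d−1, the element p_{k,i} = (a − kr − 2)·e_i + ((k+1)a − 1)·e_d (note a − kr − 2 ≥ 0) satisfies: p_{k,i} ∉ S(a,r), and p_{k,i} + n ∈ S(a,r) for every nonzero n ∈ ℕ^d. In other words, p_{k,i} is a maximal gap of S(a,r) with respect to the componentwise order, hence p_{k,i} ∈ FA(S(a,r)). -/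

import Mathlib

/-! Common definitions for C-semigroups in `ℕ^d = Fin d → ℕ`. -/

/-- `x ≤_L y` iff `y = x + l` for some `l ∈ L`. -/
def leL {M : Type*} [AddCommMonoid M] (L : Set M) (x y : M) : Prop :=
  ∃ l ∈ L, y = x + l

/-- Elements of `A` maximal with respect to `≤_L`. -/
def maximalsL {M : Type*} [AddCommMonoid M] (L A : Set M) : Set M :=
  {a | a ∈ A ∧ ∀ b ∈ A, leL L a b → a = b}

/-- The Apéry set of `S` with respect to `X`. -/
def aperySet {M : Type*} [AddCommMonoid M] (S : AddSubmonoid M) (X : Set M) : Set M :=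
  {s | s ∈ S ∧ ¬ ∃ x ∈ X, ∃ t ∈ S, s = t + x}

/-- Integer points of the rational cone spanned by `S`. -/
def coneSet {d : ℕ} (S : AddSubmonoid (Fin d → ℕ)) : Set (Fin d → ℕ) :=
  {x | ∃ (n : ℕ) (c : Fin n → ℚ) (s : Fin n → (Fin d → ℕ)),
      (∀ i, 0 ≤ c i) ∧ (∀ i, s i ∈ S) ∧ ∀ j, (x j : ℚ) = ∑ i, c i * (s i j : ℚ)}

/-- The set of gaps `H(S) = C(S) \ S`. -/
def gapSet {d : ℕ} (S : AddSubmonoid (Fin d → ℕ)) : Set (Fin d → ℕ) :=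
  coneSet S \ (S : Set (Fin d → ℕ))

/-- Pseudo-Frobenius elements of `S`. -/
def pseudoFrobenius {d : ℕ} (S : AddSubmonoid (Fin d → ℕ)) : Set (Fin d → ℕ) :=
  {h | h ∈ gapSet S ∧ ∀ s ∈ S, s ≠ 0 → h + s ∈ S}

/-- Special gaps of `S`. -/
def specialGaps {d : ℕ} (S : AddSubmonoid (Fin d → ℕ)) : Set (Fin d → ℕ) :=
  {h | h ∈ pseudoFrobenius S ∧ h + h ∈ S}

/-- The conductor of `S`. -/
def conductorSet {d : ℕ} (S : AddSubmonoid (Fin d → ℕ)) : Set (Fin d → ℕ) :=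
  {s | s ∈ S ∧ ∀ c ∈ coneSet S, s + c ∈ S}

/-- A relaxed monomial order on `ℕ^d`. -/
structure RelaxedMonomialOrder (d : ℕ) where
  le : (Fin d → ℕ) → (Fin d → ℕ) → Prop
  isLinearOrder : IsLinearOrder (Fin d → ℕ) le
  zero_le : ∀ v, le 0 v
  le_add_right : ∀ u v w, le u v → le u (v + w)

/-- A term order on `ℕ^d`. -/
structure TermOrderOn (d : ℕ) where
  le : (Fin d → ℕ) → (Fin d → ℕ) → Prop
  isLinearOrder : IsLinearOrder (Fin d → ℕ) le
  zero_le : ∀ v, le 0 v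
  add_le_add_right : ∀ u v w, le u v → le (u + w) (v + w)

/-- Frobenius allowable elements of a C-semigroup `S`. -/
def frobAllowable {d : ℕ} (S : AddSubmonoid (Fin d → ℕ)) : Set (Fin d → ℕ) :=
  {h | h ∈ gapSet S ∧ ∃ o : RelaxedMonomialOrder d, ∀ x ∈ gapSet S, o.le x h}

/-- Pseudo-Frobenius elements, complement version (for generalized numerical semigroups). -/
def PFmonoid {M : Type*} [AddCommMonoid M] (S : AddSubmonoid M) : Set M :=
  {h | h ∉ S ∧ ∀ s ∈ S, s ≠ 0 → h + s ∈ S}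

/-- Conductor, complement version (for generalized numerical semigroups). -/
def conductorMonoid {M : Type*} [AddCommMonoid M] (S : AddSubmonoid M) : Set M :=
  {s | s ∈ S ∧ ∀ n : M, s + n ∈ S}

/-- Frobenius allowable elements, complement version (for generalized numerical semigroups). -/
def FAmonoid {d : ℕ} (S : AddSubmonoid (Fin d → ℕ)) : Set (Fin d → ℕ) :=
  {h | h ∉ S ∧ ∃ o : RelaxedMonomialOrder d, ∀ x, x ∉ S → o.le x h}

section AuxFA
variable {d : ℕ}

noncomputable local instance lexLO' : LinearOrder (Lex (Fin d → ℕ)) :=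
  @Pi.Lex.linearOrder (Fin d) (fun _ => ℕ) inferInstance
    (inferInstance : WellFoundedLT (Fin d)) (fun _ => inferInstance)

lemma toLex_mono' (x y : Fin d → ℕ) (h : x ≤ y) : (toLex x : Lex (Fin d → ℕ)) ≤ toLex y :=
  @Pi.toLex_monotone (Fin d) (fun _ => ℕ) inferInstance (fun _ => inferInstance)
    (inferInstance : WellFoundedLT (Fin d)) x y h

lemma arith_notmem (a r k c t : ℕ) (ha : 0 < a) (hr : 0 < r) (hkr2 : k * r + 2 ≤ a)
    (h1 : t + ((k + 1) * a - 1) ≤ (a - k * r - 2) + ((k + 1) * a - 1))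
    (h2 : c * a + t ≤ (k + 1) * a - 1) (h3 : (k + 1) * a - 1 ≤ c * (a + r) + t) : False := by
  have c1 : k * r ≤ a := le_trans (Nat.le_add_right _ 2) hkr2
  have c2 : 2 ≤ a - k * r := Nat.le_sub_of_add_le (by rw [add_comm]; exact hkr2)
  have c3 : 1 ≤ (k + 1) * a := Nat.one_le_iff_ne_zero.mpr (by positivity)
  have h6 : (0 : ℤ) ≤ (t : ℤ) := by positivity
  zify [c1, c2, c3] at h1 h2 h3
  rcases le_or_gt c k with hc | hc
  · have h4 : (c : ℤ) * ((a : ℤ) + r) ≤ (k : ℤ) * ((a : ℤ) + r) := by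
      have := mul_le_mul_left hc (a + r)
      exact_mod_cast this
    have e1 : (k : ℤ) * ((a : ℤ) + r) = k * a + k * r := by ring
    have e2 : ((k : ℤ) + 1) * a = k * a + a := by ring
    linarith
  · have h5 : ((k : ℤ) + 1) * a ≤ (c : ℤ) * a := by
      have : (k + 1) * a ≤ c * a := mul_le_mul_left hc a
      exact_mod_cast this
    linarith


open Classical in
lemma fa_of_max (S : AddSubmonoid (Fin d → ℕ)) (P : Fin d → ℕ)
    (h1 : P ∉ S) (h2 : ∀ n : Fin d → ℕ, n ≠ 0 → P + n ∈ S) : P ∈ FAmonoid S := by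
  refine ⟨h1, ?_⟩
  have hP0 : P ≠ 0 := by rintro rfl; exact h1 (zero_mem S)
  set f : (Fin d → ℕ) → ℕ := fun x => if x = P then 1 else if P ≤ x then 2 else 0 with hf
  have hle0 : ∀ v : Fin d → ℕ, (0 : Fin d → ℕ) ≤ v := fun v m => Nat.zero_le _
  have hself : ∀ v w : Fin d → ℕ, v ≤ v + w := fun v w m => Nat.le_add_right _ _
  have hf0 : f 0 = 0 := by
    simp only [hf]
    rw [if_neg (Ne.symm hP0), if_neg]
    intro h
    exact hP0 (le_antisymm (hle0 P) h).symm
  have hfP : f P = 1 := by simp [hf]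
  have hmono : ∀ v w : Fin d → ℕ, f v ≤ f (v + w) := by
    intro v w
    rcases eq_or_ne v P with hv | hv
    · rcases eq_or_ne (v + w) P with hw | hw
      · have hw2 : P + w = P := hv ▸ hw
        simp only [hf, hv, hw2, if_pos rfl, le_refl]
      · have hP : P ≤ v + w := hv ▸ hself v w
        simp only [hf, hv, hw, hP, if_true, if_neg hw, if_pos hP]
        have hPP : P ≤ P + w := hself P w
        split <;> simp [hPP]
    · by_cases hv2 : P ≤ v
      · rcases eq_or_ne (v + w) P with hw | hw
        · exfalso
          have hvP : v ≤ P := hw ▸ hself v w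
          exact hv (le_antisymm hvP hv2)
        · have h3 : P ≤ v + w := le_trans hv2 (hself v w)
          simp [hf, hv, hv2, h3, hw]
      · simp [hf, hv, hv2]
  refine ⟨⟨fun x y => f x < f y ∨ (f x = f y ∧ (toLex x : Lex (Fin d → ℕ)) ≤ toLex y), ?_, ?_, ?_⟩, ?_⟩
  · exact {
      refl := fun x => Or.inr ⟨rfl, le_refl _⟩
      trans := by
        rintro x y zz (h | ⟨h, hl⟩) (h' | ⟨h', hl'⟩)
        · exact Or.inl (h.trans h')
        · exact Or.inl (h'.symm ▸ h)
        · exact Or.inl (h ▸ h')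
        · exact Or.inr ⟨h.trans h', le_trans hl hl'⟩
      antisymm := by
        rintro x y (h | ⟨h, hl⟩) (h' | ⟨h', hl'⟩)
        · omega
        · omega
        · omega
        · exact toLex.injective (le_antisymm hl hl')
      total := by
        intro x y
        rcases lt_trichotomy (f x) (f y) with h | h | h
        · exact Or.inl (Or.inl h)
        · rcases le_total (toLex x : Lex (Fin d → ℕ)) (toLex y) with hl | hl
          · exact Or.inl (Or.inr ⟨h, hl⟩)
          · exact Or.inr (Or.inr ⟨h.symm, hl⟩)
        · exact Or.inr (Or.inl h) }
  · intro v
    rw [hf0]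
    rcases Nat.eq_zero_or_pos (f v) with h | h
    · exact Or.inr ⟨h.symm, toLex_mono' _ _ (hle0 v)⟩
    · exact Or.inl h
  · intro u v w h
    have hm := hmono v w
    rcases h with h | ⟨h, hlex⟩
    · exact Or.inl (lt_of_lt_of_le h hm)
    · rcases lt_or_eq_of_le hm with h' | h'
      · exact Or.inl (h ▸ h')
      · exact Or.inr ⟨h.trans h', le_trans hlex (toLex_mono' _ _ (hself v w))⟩
  · intro x hx
    show f x < f P ∨ (f x = f P ∧ (toLex x : Lex (Fin d → ℕ)) ≤ toLex P)
    by_cases hxP : x = P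
    · subst hxP; exact Or.inr ⟨rfl, le_refl _⟩
    · rw [hfP]
      by_cases hPx : P ≤ x
      · exfalso
        set n : Fin d → ℕ := fun m => x m - P m with hn
        have hxs : x = P + n := by
          funext m; have : P m ≤ x m := Pi.le_def.mp hPx m; simp only [Pi.add_apply, hn]; omega
        have hne : n ≠ 0 := by
          intro h
          apply hxP
          funext m
          have h0 : n m = 0 := by rw [h]; rfl
          have : P m ≤ x m := Pi.le_def.mp hPx m
          simp only [hn] at h0
          omega
        exact hx (hxs ▸ h2 n hne)
      · left
        simp only [hf, if_neg hxP, if_neg hPx]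
        omega

end AuxFA

/-- With `S = S(a,r)` and `p = ⌈(a-1)/r⌉`, for `0 ≤ k ≤ p - 1` and
`1 ≤ i ≤ d - 1`, the element `p_{k,i} = (a - kr - 2)·e_i + ((k+1)a - 1)·e_d` is a gap of
`S(a,r)` which becomes an element of `S(a,r)` after adding any nonzero `n ∈ ℕ^d`; hence
it is a componentwise-maximal gap and belongs to `FA(S(a,r))`. -/
theorem stmt18 {d : ℕ} (a r : ℕ) (hd : 2 ≤ d) (ha : 0 < a) (hr : 0 < r)
    (hra : r + 1 < a)
    (S : AddSubmonoid (Fin d → ℕ))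
    (hS : S = AddSubmonoid.closure
      ({x : Fin d → ℕ | ∃ i : Fin d, (i : ℕ) + 1 < d ∧ x = Pi.single i 1} ∪
       {x : Fin d → ℕ | ∃ j : ℕ, j ≤ r ∧
          x = Pi.single (⟨d - 1, by omega⟩ : Fin d) (a + j)} ∪
       {x : Fin d → ℕ | ∃ i : Fin d, (i : ℕ) + 1 < d ∧
          x = Pi.single i 1 + Pi.single (⟨d - 1, by omega⟩ : Fin d) 1}))
    (k : ℕ) (hk : k ≤ (a - 1 + r - 1) / r - 1)
    (i : Fin d) (hi : (i : ℕ) + 1 < d) :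
    (Pi.single i (a - k * r - 2) +
        Pi.single (⟨d - 1, by omega⟩ : Fin d) ((k + 1) * a - 1)) ∉ S ∧
    (∀ n : Fin d → ℕ, n ≠ 0 →
      (Pi.single i (a - k * r - 2) +
        Pi.single (⟨d - 1, by omega⟩ : Fin d) ((k + 1) * a - 1)) + n ∈ S) ∧
    (Pi.single i (a - k * r - 2) +
        Pi.single (⟨d - 1, by omega⟩ : Fin d) ((k + 1) * a - 1)) ∈ FAmonoid S := by
  classical
  have hd1 : d - 1 < d := by omega
  set z : Fin d := ⟨d - 1, hd1⟩ with hzdef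
  have hzmk : ∀ (h : d - 1 < d), (⟨d - 1, h⟩ : Fin d) = z := fun _ => rfl
  try simp only [hzmk] at hS
  have hvz : (z : ℕ) = d - 1 := rfl
  have hiz : i ≠ z := by
    intro h
    have : (i : ℕ) = d - 1 := by rw [h]
    omega
  have hne_z : ∀ j : Fin d, j ≠ z → (j : ℕ) + 1 < d := by
    intro j hj
    have h1 : (j : ℕ) < d := j.isLt
    have h2 : (j : ℕ) ≠ d - 1 := fun h => hj (Fin.ext (h.trans hvz.symm))
    omega
  -- generators
  have hgen1 : ∀ j : Fin d, (j : ℕ) + 1 < d → Pi.single j 1 ∈ S := by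
    intro j hj; rw [hS]; exact AddSubmonoid.subset_closure (Or.inl (Or.inl ⟨j, hj, rfl⟩))
  have hgen2 : ∀ jj : ℕ, jj ≤ r → Pi.single z (a + jj) ∈ S := by
    intro jj hjj; rw [hS]; exact AddSubmonoid.subset_closure (Or.inl (Or.inr ⟨jj, hjj, rfl⟩))
  have hgen3 : ∀ j : Fin d, (j : ℕ) + 1 < d → Pi.single j 1 + Pi.single z 1 ∈ S := by
    intro j hj; rw [hS]; exact AddSubmonoid.subset_closure (Or.inr ⟨j, hj, rfl⟩)
  have hsingle_smul : ∀ (j : Fin d) (c : ℕ), c • (Pi.single j 1 : Fin d → ℕ) = Pi.single j c := by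
    intro j c
    funext m
    simp only [Pi.smul_apply, Pi.single_apply, smul_eq_mul]
    split_ifs <;> simp
  have hsingleS : ∀ (j : Fin d), (j : ℕ) + 1 < d → ∀ c : ℕ, Pi.single j c ∈ S := by
    intro j hj c
    rw [← hsingle_smul j c]
    exact AddSubmonoid.nsmul_mem S (hgen1 j hj) c
  have hmixS : ∀ (j : Fin d), (j : ℕ) + 1 < d → ∀ c : ℕ,
      Pi.single j c + Pi.single z c ∈ S := by
    intro j hj c
    have h := AddSubmonoid.nsmul_mem S (hgen3 j hj) c
    rw [smul_add, hsingle_smul, hsingle_smul] at h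
    exact h
  have hA : ∀ w : Fin d → ℕ, w z = 0 → w ∈ S := by
    intro w hw
    rw [← Finset.univ_sum_single w]
    refine AddSubmonoid.sum_mem S ?_
    intro j _
    rcases eq_or_ne j z with rfl | hj
    · rw [hw]
      simp only [Pi.single_zero]
      exact zero_mem S
    · exact hsingleS j (hne_z j hj) _
  have hTz : ∀ c e : ℕ, e ≤ c * r → Pi.single z (c * a + e) ∈ S := by
    intro c
    induction c with
    | zero =>
      intro e he
      simp only [Nat.zero_mul, Nat.le_zero] at he
      subst he
      simp only [Nat.zero_mul, Nat.add_zero, Pi.single_zero]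
      exact zero_mem S
    | succ c ih =>
      intro e he
      rcases le_total e r with h | h
      · have heq : (c + 1) * a + e = c * a + (a + e) := by ring
        rw [heq, Pi.single_add]
        exact add_mem (by simpa using ih 0 (Nat.zero_le _)) (hgen2 e h)
      · have he' : e - r ≤ c * r := by
          have h2 : (c + 1) * r = c * r + r := by ring
          rw [h2] at he
          generalize c * r = CR at he ⊢
          omega
        have heq : (c + 1) * a + e = (c * a + (e - r)) + (a + r) := by
          have h3 : (c + 1) * a = c * a + a := by ring
          rw [h3]
          generalize c * a = CA
          omega
        rw [heq, Pi.single_add]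
        exact add_mem (ih (e - r) he') (hgen2 r le_rfl)
  have hSUF : ∀ (c e t t' : ℕ) (j : Fin d), (j : ℕ) + 1 < d → ∀ w : Fin d → ℕ,
      e ≤ c * r → w z = 0 →
      Pi.single i t + Pi.single j t' + w + Pi.single z (c * a + e + t + t') ∈ S := by
    intro c e t t' j hj w he hw
    have heq : Pi.single i t + Pi.single j t' + w + Pi.single z (c * a + e + t + t')
        = ((Pi.single i t + Pi.single z t) + (Pi.single j t' + Pi.single z t') + w)
          + Pi.single z (c * a + e) := by
      simp only [Pi.single_add]
      abel
    rw [heq]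
    exact add_mem (add_mem (add_mem (hmixS i hi t) (hmixS j hj t')) (hA w hw)) (hTz c e he)
  -- arithmetic: k*r + 2 ≤ a
  obtain ⟨X, hX⟩ : ∃ X : ℕ, (a - 1 + r - 1) / r = X := ⟨_, rfl⟩
  have hX1 : 1 ≤ X := hX ▸ (Nat.one_le_div_iff hr).mpr (by omega)
  have hX2 : X * r ≤ a - 1 + r - 1 := hX ▸ Nat.div_mul_le_self _ _
  rw [hX] at hk
  have hk1 : (k + 1) * r ≤ a - 1 + r - 1 := le_trans (mul_le_mul_left (by omega) r) hX2
  have hkr2 : k * r + 2 ≤ a := by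
    have h2 : (k + 1) * r = k * r + r := by ring
    rw [h2] at hk1
    generalize k * r = KR at hk1 ⊢
    omega
  -- upper bound predicate
  have hQ : ∀ x, x ∈ S → ∃ c t : ℕ,
      t + x z ≤ ∑ m, x m ∧ c * a + t ≤ x z ∧ x z ≤ c * (a + r) + t := by
    intro x hx
    rw [hS] at hx
    induction hx using AddSubmonoid.closure_induction with
    | mem y hy =>
      rcases hy with (⟨j, hj, rfl⟩ | ⟨jj, hjj, rfl⟩) | ⟨j, hj, rfl⟩
      · have hjz : z ≠ j := fun h => by
          have : (j : ℕ) = d - 1 := by rw [← h]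
          omega
        refine ⟨0, 0, ?_, ?_, ?_⟩ <;>
          simp [Pi.single_eq_of_ne hjz, Finset.sum_pi_single']
      · refine ⟨1, 0, ?_, ?_, ?_⟩ <;>
          simp [Pi.single_eq_same, Finset.sum_pi_single', hjj]
      · have hjz : z ≠ j := fun h => by
          have : (j : ℕ) = d - 1 := by rw [← h]
          omega
        refine ⟨0, 1, ?_, ?_, ?_⟩ <;>
          simp [Pi.single_eq_of_ne hjz, Pi.single_eq_same, Finset.sum_pi_single',
            Finset.sum_add_distrib]
    | zero => exact ⟨0, 0, by simp⟩
    | add x y hx hy ihx ihy =>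
      obtain ⟨c1, t1, ha1, ha2, ha3⟩ := ihx
      obtain ⟨c2, t2, hb1, hb2, hb3⟩ := ihy
      refine ⟨c1 + c2, t1 + t2, ?_, ?_, ?_⟩
      · have hsum : ∑ m, (x + y) m = ∑ m, x m + ∑ m, y m := by
          simp [Finset.sum_add_distrib]
        rw [hsum]
        have : (x + y) z = x z + y z := rfl
        rw [this]
        linarith
      · have : (x + y) z = x z + y z := rfl
        rw [this, add_mul]
        linarith
      · have : (x + y) z = x z + y z := rfl
        rw [this, add_mul]
        linarith
  -- the element
  set Pel : Fin d → ℕ :=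
    Pi.single i (a - k * r - 2) + Pi.single z ((k + 1) * a - 1) with hPel
  have hPelz : Pel z = (k + 1) * a - 1 := by
    rw [hPel]
    simp only [Pi.add_apply]
    rw [Pi.single_eq_of_ne (Ne.symm hiz), Pi.single_eq_same, zero_add]
  have hPelsum : ∑ m, Pel m = (a - k * r - 2) + ((k + 1) * a - 1) := by
    rw [hPel]
    simp [Finset.sum_add_distrib, Finset.sum_pi_single']
  have key1 : Pel ∉ S := by
    intro hmem
    obtain ⟨c, t, h1, h2, h3⟩ := hQ Pel hmem
    rw [hPelz] at h1 h2 h3; rw [hPelsum] at h1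
    exact arith_notmem a r k c t ha hr hkr2 h1 h2 h3
  have key2 : ∀ n : Fin d → ℕ, n ≠ 0 → Pel + n ∈ S := by
    intro n hn
    by_cases hnz : n z = 0
    · -- no contribution at the last coordinate
      obtain ⟨j0, hj0⟩ : ∃ j0, n j0 ≠ 0 := Function.ne_iff.mp hn
      have hj0z : j0 ≠ z := by
        intro h; rw [h] at hj0; exact hj0 hnz
      have hj0d : (j0 : ℕ) + 1 < d := hne_z j0 hj0z
      have hj1 : 1 ≤ n j0 := Nat.one_le_iff_ne_zero.mpr hj0
      set w : Fin d → ℕ := fun m => if m = j0 then n m - 1 else n m with hw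
      have hwz : w z = 0 := by
        rw [hw]
        simp only [if_neg hj0z.symm]
        exact hnz
      have hmem := hSUF k (k * r) (a - k * r - 2) 1 j0 hj0d w le_rfl hwz
      have hval : k * a + k * r + (a - k * r - 2) + 1 = (k + 1) * a - 1 := by
        have e2 : (k + 1) * a = k * a + a := by ring
        rw [e2]
        generalize k * a = KA
        generalize hgen : k * r = KR at hkr2 ⊢
        omega
      rw [hval] at hmem
      have heq : Pel + n
          = Pi.single i (a - k * r - 2) + Pi.single j0 1 + w + Pi.single z ((k + 1) * a - 1) := by
        rw [hPel, hw]
        generalize a - k * r - 2 = A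
        generalize (k + 1) * a - 1 = B
        funext m
        rcases eq_or_ne m j0 with rfl | hmj
        · simp only [Pi.add_apply, Pi.single_apply, if_neg hj0z, if_pos rfl]
          split_ifs <;> omega
        · simp only [Pi.add_apply, Pi.single_apply, if_neg hmj]
          split_ifs <;> omega
      rw [heq]
      exact hmem
    · -- positive contribution at the last coordinate
      have hnz1 : 1 ≤ n z := Nat.one_le_iff_ne_zero.mpr hnz
      have c3 : 1 ≤ (k + 1) * a := Nat.one_le_iff_ne_zero.mpr (by positivity)
      obtain ⟨c, hc⟩ : ∃ c : ℕ, c = ((k + 1) * a - 1 + n z) / a := ⟨_, rfl⟩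
      have hck : k + 1 ≤ c := by
        rw [hc, Nat.le_div_iff_mul_le ha]
        generalize (k + 1) * a = Y at c3 ⊢
        omega
      obtain ⟨ρ, hρa, hρM⟩ : ∃ ρ : ℕ, ρ < a ∧ c * a + ρ = (k + 1) * a - 1 + n z := by
        refine ⟨((k + 1) * a - 1 + n z) % a, Nat.mod_lt _ ha, ?_⟩
        rw [hc, mul_comm]
        exact Nat.div_add_mod _ a
      obtain ⟨e, t, he, ht, hM⟩ : ∃ e t : ℕ, e ≤ c * r ∧ t ≤ a - k * r - 2 ∧
          c * a + e + t + 0 = (k + 1) * a - 1 + n z := by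
        rcases le_total ρ (c * r) with h | h
        · exact ⟨ρ, 0, h, Nat.zero_le _, by omega⟩
        · refine ⟨c * r, ρ - c * r, le_rfl, ?_, ?_⟩
          · have h4 : k * r + r ≤ c * r := by
              calc k * r + r = (k + 1) * r := by ring
              _ ≤ c * r := mul_le_mul_left hck r
            generalize c * r = CR at h h4 ⊢
            generalize k * r = KR at h4 hkr2 ⊢
            omega
          · generalize hCR : c * r = CR at h ⊢
            omega
      set w : Fin d → ℕ :=
        fun m => if m = z then 0 else (if m = i then a - k * r - 2 - t else 0) + n m with hw
      have hwz : w z = 0 := by rw [hw]; simp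
      have hmem := hSUF c e t 0 i hi w he hwz
      have heq : Pel + n
          = Pi.single i t + Pi.single i 0 + w + Pi.single z (c * a + e + t + 0) := by
        rw [hPel, hw, hM]
        generalize hA2 : a - k * r - 2 = A at ht ⊢
        generalize (k + 1) * a - 1 = B
        funext m
        rcases eq_or_ne m z with rfl | hmz
        · simp only [Pi.add_apply, Pi.single_apply, if_pos rfl, if_neg hiz.symm]
          split_ifs <;> omega
        · simp only [Pi.add_apply, Pi.single_apply, if_neg hmz]
          split_ifs <;> omega
      rw [heq]
      exact hmem
  exact ⟨key1, key2, fa_of_max S Pel key1 key2⟩
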